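/- arXiv:1805.04592 — 7 statements merged into one kernel-verified Lean document; each statement's English description precedes it below -/
import Mathlib

section
/- Let Λ be a full-rank lattice in R^d with basis b_1, ..., b_d, and let b̂_1, ..., b̂_d be the Gram–Schmidt orthogonalization of this basis. Then the half-open box B̂ = [0, b̂_1) × ... × [0, b̂_d) (the set of all sums Σ λ_i b̂_i with 0 ≤ λ_i < 1) satisfies B̂ + Λ = R^d, i.e., every point of R^d is congruent modulo Λ to a point of B̂. -/
/-- the half-open Gram–Schmidt box of a basis `b` of a full-rank
lattice tiles `ℝ^d`: every point of `ℝ^d` is a point of the box `B̂` (all sums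
`∑ λᵢ b̂ᵢ` with `0 ≤ λᵢ < 1`, where `b̂ = InnerProductSpace.gramSchmidt ℝ b`) plus a lattice point. -/
theorem stmt_1 (d : ℕ) [WellFoundedLT (Fin d)]
    (b : Fin d → EuclideanSpace ℝ (Fin d))
    (hb : LinearIndependent ℝ b)
    (x : EuclideanSpace ℝ (Fin d)) :
    ∃ lam : Fin d → ℝ, (∀ i, 0 ≤ lam i ∧ lam i < 1) ∧
      ∃ c : Fin d → ℤ,
        x = (∑ i, lam i • InnerProductSpace.gramSchmidt ℝ b i) + ∑ i, (c i : ℝ) • b i := by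
  rcases eq_or_ne d 0 with rfl | hd0
  · exact ⟨0, fun i => i.elim0, 0, Subsingleton.elim _ _⟩
  haveI : Nonempty (Fin d) := ⟨⟨0, Nat.pos_of_ne_zero hd0⟩⟩
  have hd : Fintype.card (Fin d) = Module.finrank ℝ (EuclideanSpace ℝ (Fin d)) := by simp
  set B : Module.Basis (Fin d) ℝ (EuclideanSpace ℝ (Fin d)) :=
    basisOfLinearIndependentOfCardEqFinrank hb hd with hBdef
  have hB : ⇑B = b := coe_basisOfLinearIndependentOfCardEqFinrank hb hd
  set G := InnerProductSpace.gramSchmidtBasis B with hGdef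
  have hG : ⇑G = InnerProductSpace.gramSchmidt ℝ b := by rw [hGdef, InnerProductSpace.coe_gramSchmidtBasis, hB]
  -- triangularity: coefficient of b m at index k > m vanishes
  have hbk : ∀ m k : Fin d, m < k → G.repr (b m) k = 0 := by
    intro m k hmk
    have h1 : b m ∈ Submodule.span ℝ (InnerProductSpace.gramSchmidt ℝ b '' Set.Iic m) := by
      rw [InnerProductSpace.span_gramSchmidt_Iic ℝ b m]
      exact Submodule.subset_span ⟨m, Set.mem_Iic.2 le_rfl, rfl⟩
    rw [← hG] at h1
    have h2 := Module.Basis.repr_support_subset_of_mem_span G (Set.Iic m) h1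
    by_contra h
    exact absurd (h2 (Finsupp.mem_support_iff.2 h)) (by simpa using hmk.not_ge)
  have hbm : ∀ m : Fin d, G.repr (b m) m = 1 := by
    intro m
    have hdef := InnerProductSpace.gramSchmidt_def' ℝ b m
    have hsplit : G.repr (b m) m = G.repr (InnerProductSpace.gramSchmidt ℝ b m) m
        + G.repr (∑ i ∈ Finset.Iio m, (ℝ ∙ InnerProductSpace.gramSchmidt ℝ b i).starProjection
            (b m)) m := by
      rw [← Finsupp.add_apply, ← map_add, ← hdef]
    rw [hsplit]
    have h1 : G.repr (InnerProductSpace.gramSchmidt ℝ b m) m = 1 := by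
      rw [← hG, G.repr_self]; simp
    have h2 : G.repr (∑ i ∈ Finset.Iio m, (ℝ ∙ InnerProductSpace.gramSchmidt ℝ b i).starProjection
        (b m)) m = 0 := by
      rw [map_sum, Finsupp.finset_sum_apply]
      refine Finset.sum_eq_zero fun i hi => ?_
      have hi' : i < m := Finset.mem_Iio.1 hi
      rw [Submodule.starProjection_singleton, map_smul, Finsupp.smul_apply, ← hG,
        G.repr_self, Finsupp.single_apply, if_neg (by exact fun h => hi'.ne h), smul_zero]
    rw [h1, h2, add_zero]
  -- main downward induction
  have key : ∀ n : ℕ, n ≤ d → ∃ c : Fin d → ℤ,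
      ∀ k : Fin d, d - n ≤ (k : ℕ) →
        0 ≤ G.repr (x - ∑ i, (c i : ℝ) • b i) k ∧
          G.repr (x - ∑ i, (c i : ℝ) • b i) k < 1 := by
    intro n
    induction n with
    | zero => exact fun _ => ⟨0, fun k hk => absurd k.isLt (by omega)⟩
    | succ n ih =>
      intro hn
      obtain ⟨c, hc⟩ := ih (Nat.le_of_succ_le hn)
      by_cases hdn : d - n = 0
      · exact ⟨c, fun k hk => hc k (by omega)⟩
      · set m : Fin d := ⟨d - n - 1, by omega⟩ with hm
        set y := x - ∑ i, (c i : ℝ) • b i with hy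
        set q : ℤ := ⌊G.repr y m⌋ with hq
        set c' : Fin d → ℤ := fun i => if i = m then c i + q else c i with hc'
        refine ⟨c', ?_⟩
        have hterm : ∀ i : Fin d, ((c' i : ℝ)) • b i
            = ((c i : ℝ)) • b i + (if i = m then (q : ℝ) • b m else 0) := by
          intro i
          by_cases h : i = m
          · subst h
            simp only [hc', if_pos rfl, if_true]
            push_cast
            rw [add_smul]
          · simp [hc', h]
        have hsum : ∑ i, ((c' i : ℝ)) • b i
            = (∑ i, ((c i : ℝ)) • b i) + (q : ℝ) • b m := by
          rw [Finset.sum_congr rfl fun i _ => hterm i, Finset.sum_add_distrib,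
            Finset.sum_ite_eq' Finset.univ m]
          simp
        have hx' : x - ∑ i, ((c' i : ℝ)) • b i = y - (q : ℝ) • b m := by
          rw [hsum, hy]; abel
        intro k hk
        rw [hx', map_sub, map_smul, Finsupp.sub_apply, Finsupp.smul_apply]
        rcases eq_or_lt_of_le hk with heq | hlt
        · have hkm : k = m := by apply Fin.ext; simp only [hm]; omega
          rw [hkm, hbm m, smul_eq_mul, mul_one]
          constructor
          · exact sub_nonneg.2 (Int.floor_le _)
          · linarith [Int.lt_floor_add_one (G.repr y m)]
        · have hmk : m < k := by
            rw [Fin.lt_def]; simp only [hm]; omega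
          rw [hbk m k hmk, smul_zero, sub_zero]
          exact hc k (by omega)
  obtain ⟨c, hc⟩ := key d le_rfl
  refine ⟨fun k => G.repr (x - ∑ i, (c i : ℝ) • b i) k, fun k => hc k (by omega), c, ?_⟩
  have hrep := Module.Basis.sum_repr G (x - ∑ i, (c i : ℝ) • b i)
  rw [hG] at hrep
  rw [hrep]
  abel
end

section
/- Let Λ be a full-rank sublattice of Z^d with determinant D = det(Λ). Then every point of Z^d lies in (D − 1)·S + Λ, where S = {x ∈ R^d_{≥0} : x_1 + ... + x_d ≤ 1} is the standard d-dimensional simplex. -/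
/-!
If `y ≥ 0` has coordinate sum at least `D = [ℤ^d : Λ]`, a monotone lattice path from `0` towards
`y` visits `D + 1` points with coordinate sums `0, 1, …, D`; two of them lie in the same coset of
`Λ`, and their difference is a vector of `Λ` between `0` and `y` with positive coordinate sum.
Subtracting such vectors decreases the coordinate sum, so starting from a point `x - l₀ ≥ 0` with
`l₀ ∈ Λ` we reach a representative of `x` modulo `Λ` with coordinate sum at most `D - 1`.
-/

open Finset

section Path

variable {ι : Type*} [Fintype ι]

lemma exists_monotone_path_in_Icc (y : ι → ℤ) (hy : 0 ≤ y) :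
    ∃ p : ℕ → ι → ℤ, Monotone p ∧ (∀ k, p k ∈ Set.Icc 0 y) ∧
      ∀ k : ℕ, (k : ℤ) ≤ ∑ i, y i → ∑ i, p k i = k := by
  classical
  obtain ⟨n, hn⟩ : ∃ n : ℕ, ∑ i, y i = n := Int.eq_ofNat_of_zero_le (sum_nonneg fun i _ => hy i)
  induction n generalizing y with
  | zero =>
    refine ⟨0, monotone_const, fun _ => ⟨le_rfl, hy⟩, fun k hk => ?_⟩
    simp only [Pi.zero_apply, sum_const_zero]
    omega
  | succ n ih =>
    obtain ⟨j, hj⟩ : ∃ j, 0 < y j := by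
      by_contra! h
      have : ∑ i, y i ≤ 0 := sum_nonpos fun i _ => h i
      omega
    set y' := y - Pi.single j 1
    have hy' : 0 ≤ y' := fun i => by
      by_cases hij : i = j
      · subst hij
        simp only [Pi.zero_apply, Pi.sub_apply, Pi.single_eq_same, Int.sub_nonneg, y']
        omega
      · simpa [y', hij] using hy i
    have hy'y : y' ≤ y := sub_le_self _ (Pi.single_nonneg.mpr zero_le_one)
    have hy'sum : ∑ i, y' i = n := by simp [y', sum_sub_distrib, hn]
    obtain ⟨p, hp, hpy, hps⟩ := ih y' hy' hy'sum
    -- the path for `y - eⱼ`, followed by one step to `y`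
    refine ⟨fun k => if k ≤ n then p k else y, monotone_nat_of_le_succ fun k => ?_,
      fun k => ?_, fun k hk => ?_⟩
    · rcases lt_trichotomy k n with h | rfl | h
      · simp only [h.le, Nat.succ_le_of_lt h, if_true]; exact hp k.le_succ
      · simpa using (hpy k).2.trans hy'y
      · simp [h.not_ge, (h.trans k.lt_succ_self).not_ge]
    · dsimp only
      split_ifs
      · exact ⟨(hpy k).1, (hpy k).2.trans hy'y⟩
      · exact ⟨hy, le_rfl⟩
    · dsimp only
      split_ifs with h
      · exact hps k (hy'sum ▸ Nat.cast_le.mpr h)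
      · push_cast at hn; omega

end Path

lemma AddSubgroup.exists_lt_sub_mem_of_index_ne_zero {G : Type*} [AddCommGroup G]
    {Λ : AddSubgroup G} (hΛ : Λ.index ≠ 0) (p : ℕ → G) :
    ∃ a b, a < b ∧ b ≤ Λ.index ∧ p b - p a ∈ Λ := by
  have : Finite (G ⧸ Λ) := AddSubgroup.index_ne_zero_iff_finite.mp hΛ
  have : Fintype (G ⧸ Λ) := Fintype.ofFinite _
  obtain ⟨a, b, hab, hpab⟩ := Fintype.exists_ne_map_eq_of_card_lt
    (fun k : Fin (Λ.index + 1) => (p k : G ⧸ Λ))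
    (by simp [AddSubgroup.index, Nat.card_eq_fintype_card])
  rcases Fin.lt_or_lt_of_ne hab with h | h
  · exact ⟨a, b, h, Nat.lt_succ_iff.mp b.isLt, QuotientAddGroup.eq_iff_sub_mem.mp hpab.symm⟩
  · exact ⟨b, a, h, Nat.lt_succ_iff.mp a.isLt, QuotientAddGroup.eq_iff_sub_mem.mp hpab⟩

section Lattice

variable {ι : Type*} [Fintype ι] {Λ : AddSubgroup (ι → ℤ)}

lemma exists_mem_Icc_sum_pos_of_index_le_sum (hΛ : Λ.index ≠ 0) {y : ι → ℤ} (hy : 0 ≤ y)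
    (hsum : (Λ.index : ℤ) ≤ ∑ i, y i) :
    ∃ v ∈ Λ, v ∈ Set.Icc 0 y ∧ 0 < ∑ i, v i := by
  obtain ⟨p, hp, hpy, hps⟩ := exists_monotone_path_in_Icc y hy
  obtain ⟨a, b, hab, hb, hmem⟩ := AddSubgroup.exists_lt_sub_mem_of_index_ne_zero hΛ p
  refine ⟨p b - p a, hmem, ⟨sub_nonneg.mpr (hp hab.le), ?_⟩, ?_⟩
  · exact (sub_le_self _ (hpy a).1).trans (hpy b).2
  · simp only [Pi.sub_apply, sum_sub_distrib]
    rw [hps b (by omega), hps a (by omega)]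
    omega

lemma exists_mem_le_sum_sub_le_index_sub_one (hΛ : Λ.index ≠ 0) {y : ι → ℤ} (hy : 0 ≤ y) :
    ∃ l ∈ Λ, l ≤ y ∧ ∑ i, (y - l) i ≤ Λ.index - 1 := by
  obtain ⟨n, hn⟩ : ∃ n : ℕ, ∑ i, y i = n := Int.eq_ofNat_of_zero_le (sum_nonneg fun i _ => hy i)
  induction n using Nat.strong_induction_on generalizing y with | _ n ih => ?_
  by_cases hsmall : ∑ i, y i ≤ Λ.index - 1
  · exact ⟨0, zero_mem _, hy, by simpa using hsmall⟩
  obtain ⟨v, hvΛ, hv, hvpos⟩ :=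
    exists_mem_Icc_sum_pos_of_index_le_sum hΛ hy (by omega)
  have hsub : ∑ i, (y - v) i = n - ∑ i, v i := by simp [sum_sub_distrib, hn]
  have hvy : ∑ i, v i ≤ n := hn ▸ sum_le_sum fun i _ => hv.2 i
  obtain ⟨l, hlΛ, hl, hls⟩ := ih (n - (∑ i, v i).toNat) (by omega) (sub_nonneg.mpr hv.2)
    (by rw [hsub]; omega)
  refine ⟨v + l, add_mem hvΛ hlΛ, ?_, ?_⟩
  · simpa using add_le_add (le_refl v) hl
  · rwa [← sub_sub]

end Lattice

/-- if `Λ` is a finite-index (full-rank) sublattice of `ℤ^d` with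
determinant (= index) `D`, then every point of `ℤ^d` lies in `(D−1)·S + Λ`,
where `S` is the standard simplex: i.e. it can be written as a lattice point
plus a nonnegative integer vector whose coordinate sum is at most `D − 1`. -/
theorem stmt_4 (d : ℕ) (Λ : AddSubgroup (Fin d → ℤ)) (D : ℕ)
    (hD : Nat.card ((Fin d → ℤ) ⧸ Λ) = D) (hD0 : 0 < D)
    (x : Fin d → ℤ) :
    ∃ l ∈ Λ, (∀ i, 0 ≤ x i - l i) ∧ ∑ i, (x i - l i) ≤ (D : ℤ) - 1 := by
  have hindex : Λ.index = D := hD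
  set l₀ := -(D • |x|)
  have hl₀ : l₀ ∈ Λ := neg_mem (hindex ▸ Λ.nsmul_index_mem |x|)
  have hxl₀ : 0 ≤ x - l₀ := fun i => by
    have := neg_abs_le (x i)
    have : |x i| ≤ D * |x i| := le_mul_of_one_le_left (abs_nonneg _) (by exact_mod_cast hD0)
    simp only [Pi.zero_apply, nsmul_eq_mul, Pi.sub_apply, Pi.neg_apply, Pi.mul_apply,
      Pi.natCast_apply, Pi.abs_apply, sub_neg_eq_add, l₀]
    omega
  obtain ⟨l, hlΛ, hl, hls⟩ := exists_mem_le_sum_sub_le_index_sub_one (hindex ▸ hD0.ne') hxl₀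
  refine ⟨l₀ + l, add_mem hl₀ hlΛ, fun i => ?_, ?_⟩
  · simpa [sub_add_eq_sub_sub] using hl i
  · simpa [hindex, sub_add_eq_sub_sub] using hls
end

section
/- For every positive integer k and every dimension n ≥ 2, there exist a ∈ Z^n with nonzero entries, gcd(a) = 1 and ‖a‖_∞ = k, and b ∈ Z, such that the knapsack polyhedron P(a,b) = {x ∈ R^n_{≥0} : a^T x = b} has a vertex v with min over z ∈ P(a,b) ∩ Z^n of ‖v − z‖_∞ equal to k − 1. Concretely, a = (k,...,k,1) and b = k−1 work: P(a,b) ∩ Z^n = {(k−1)e_n}, and the vertex v = ((k−1)/k)·e_1 satisfies ‖v − (k−1)e_n‖_∞ = k−1. -/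
/-!
Take `a = k` in every coordinate except `a_j = 1`, and `b = k - 1`. For a nonnegative integer
solution `z`, the coordinates of weight `k` contribute a nonnegative multiple of `k` to a total of
`k - 1`, so they vanish and `z = (k - 1) e_j` is the only integer point. For `i ≠ j` the vertex
`((k - 1) / k) e_i` lies at `ℓ∞`-distance `max ((k - 1) / k) (k - 1) = k - 1` from it.
-/

open Finset

variable {ι : Type*} [Fintype ι]

def knapsackPolyhedron (a : ι → ℤ) (b : ℤ) : Set (ι → ℝ) :=
  {x | (∀ i, 0 ≤ x i) ∧ ∑ i, (a i : ℝ) * x i = b}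

theorem norm_single_sub_single [DecidableEq ι] {E : Type*} [SeminormedAddCommGroup E] {i j : ι}
    (hij : i ≠ j) (x y : E) : ‖Pi.single (M := fun _ => E) i x - Pi.single j y‖ = max ‖x‖ ‖y‖ := by
  apply le_antisymm
  · refine (pi_norm_le_iff_of_nonneg (by positivity)).2 fun l => ?_
    by_cases hi : l = i
    · subst hi; simp [hij]
    by_cases hj : l = j
    · subst hj; simp [hi]
    · simp [hi, hj]
  · refine max_le ?_ ?_
    · have h := norm_le_pi_norm (Pi.single (M := fun _ => E) i x - Pi.single j y) i
      rwa [Pi.sub_apply, Pi.single_eq_same, Pi.single_eq_of_ne hij, sub_zero] at h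
    · have h := norm_le_pi_norm (Pi.single (M := fun _ => E) i x - Pi.single j y) j
      rwa [Pi.sub_apply, Pi.single_eq_same, Pi.single_eq_of_ne hij.symm, zero_sub, norm_neg] at h

theorem sum_mul_eq_of_forall_ne_eq_zero {R : Type*} [CommSemiring R] {a x : ι → R} {i : ι}
    (hx : ∀ l ≠ i, x l = 0) : ∑ l, a l * x l = a i * x i :=
  Fintype.sum_eq_single i fun l hl => by simp [hx l hl]

namespace knapsackPolyhedron

variable [DecidableEq ι] {a : ι → ℤ} {b : ℤ} {i : ι} {x : ι → ℝ}

theorem eq_single_of_supported (hai : a i ≠ 0) (hx : x ∈ knapsackPolyhedron a b)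
    (hsupp : ∀ l ≠ i, x l = 0) : x = Pi.single i ((b : ℝ) / a i) := by
  have hxi : (a i : ℝ) * x i = b := (sum_mul_eq_of_forall_ne_eq_zero hsupp).symm.trans hx.2
  funext l
  by_cases hl : l = i
  · subst hl
    rw [Pi.single_eq_same, eq_div_iff (by exact_mod_cast hai), mul_comm, hxi]
  · simp [hl, hsupp l hl]

theorem single_mem_extremePoints (hai : 0 < a i) (hb : 0 ≤ b) :
    Pi.single i ((b : ℝ) / a i) ∈ Set.extremePoints ℝ (knapsackPolyhedron a b) := by
  have hai' : (0 : ℝ) < a i := by exact_mod_cast hai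
  have hmem : Pi.single i ((b : ℝ) / a i) ∈ knapsackPolyhedron a b := by
    refine ⟨fun l => ?_, ?_⟩
    · by_cases hl : l = i
      · subst hl; simp only [Pi.single_eq_same]; positivity
      · simp [hl]
    · rw [sum_mul_eq_of_forall_ne_eq_zero fun l hl => Pi.single_eq_of_ne hl _, Pi.single_eq_same]
      field_simp
  refine mem_extremePoints_iff_left.2 ⟨hmem, fun y hy z hz ⟨s, t, hs, ht, _, hyz⟩ => ?_⟩
  refine eq_single_of_supported hai.ne' hy fun l hl => ?_
  have h : s * y l + t * z l = 0 := by simpa [hl] using congrFun hyz l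
  nlinarith [hy.1 l, hz.1 l]

end knapsackPolyhedron

open Function

section

variable [DecidableEq ι] {k : ℤ} {j : ι}

theorem eq_single_of_sum_update_const_mul (hk : 1 ≤ k) {z : ι → ℤ} (hz : ∀ l, 0 ≤ z l)
    (hsum : ∑ l, update (fun _ => k) j 1 l * z l = k - 1) : z = Pi.single j (k - 1) := by
  set S := ∑ l ∈ univ.erase j, z l
  have hsplit : z j + k * S = k - 1 := by
    rw [← add_sum_erase _ _ (mem_univ j)] at hsum
    rw [← hsum, update_self, one_mul, mul_sum]
    congr 1
    exact sum_congr rfl fun l hl => by rw [update_of_ne (ne_of_mem_erase hl)]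
  have hS : S = 0 := by nlinarith [hz j, sum_nonneg fun l (_ : l ∈ univ.erase j) => hz l]
  have hrest := (sum_eq_zero_iff_of_nonneg fun l _ => hz l).1 hS
  funext l
  by_cases hl : l = j
  · subst hl; rw [Pi.single_eq_same, ← hsplit, hS, mul_zero, add_zero]
  · rw [Pi.single_eq_of_ne hl, hrest l (mem_erase.2 ⟨hl, mem_univ l⟩)]

theorem intCast_mem_knapsackPolyhedron_update_const_iff (hk : 1 ≤ k) {z : ι → ℤ} :
    (fun l => (z l : ℝ)) ∈ knapsackPolyhedron (update (fun _ => k) j 1) (k - 1) ↔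
      z = Pi.single j (k - 1) := by
  constructor
  · rintro ⟨hnonneg, hsum⟩
    refine eq_single_of_sum_update_const_mul hk (fun l => Int.cast_nonneg_iff.1 (hnonneg l)) ?_
    exact Int.cast_injective (α := ℝ) (by push_cast at hsum ⊢; exact hsum)
  · rintro rfl
    refine ⟨fun l => ?_, ?_⟩
    · by_cases hl : l = j
      · subst hl; simp only [Pi.single_eq_same]; exact_mod_cast (by omega : 0 ≤ k - 1)
      · simp [hl]
    · rw [sum_mul_eq_of_forall_ne_eq_zero (i := j) fun l hl => by simp [hl]]
      simp

theorem isLeast_dist_intPoints_knapsackPolyhedron_update_const {i : ι} (hij : i ≠ j)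
    (hk : 1 ≤ k) :
    IsLeast {t : ℝ | ∃ z : ι → ℤ,
        (fun l => (z l : ℝ)) ∈ knapsackPolyhedron (update (fun _ => k) j 1) (k - 1) ∧
          t = ‖Pi.single i (((k - 1 : ℤ) : ℝ) / k) - fun l => (z l : ℝ)‖} ((k : ℝ) - 1) := by
  have hcast : (fun l => ((Pi.single j (k - 1) : ι → ℤ) l : ℝ)) = Pi.single j ((k : ℝ) - 1) := by
    funext l
    by_cases hl : l = j <;> simp [hl]
  have hk1 : (0 : ℝ) ≤ k - 1 := by rw [sub_nonneg]; exact_mod_cast hk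
  have hdist :
      ‖Pi.single i (((k - 1 : ℤ) : ℝ) / k) - (Pi.single j ((k : ℝ) - 1) : ι → ℝ)‖ = k - 1 := by
    rw [norm_single_sub_single hij]
    push_cast
    rw [Real.norm_eq_abs, Real.norm_eq_abs, abs_of_nonneg hk1, abs_of_nonneg (by positivity),
      max_eq_right (div_le_self hk1 (by exact_mod_cast hk))]
  simp only [intCast_mem_knapsackPolyhedron_update_const_iff hk, exists_eq_left, hcast, hdist,
    Set.ofPred_eq_eq_singleton]
  exact isLeast_singleton

end

/-- for every `k ≥ 1` and `n ≥ 2` there are a primitive integer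
vector `a` with nonzero entries, `‖a‖_∞ = k`, and `b ∈ ℤ` such that the knapsack
polyhedron `P(a,b)` has a vertex `v` whose minimal `ℓ∞`-distance to an integer
point of `P(a,b)` equals `k − 1`. -/
theorem stmt_6 (n k : ℕ) (hn : 2 ≤ n) (hk : 1 ≤ k) :
    ∃ (a : Fin n → ℤ) (b : ℤ),
      (∀ i, a i ≠ 0) ∧ Finset.univ.gcd a = 1 ∧
      (Finset.univ.sup fun i => (a i).natAbs) = k ∧
      ∃ P : Set (Fin n → ℝ),
        P = {x | (∀ i, 0 ≤ x i) ∧ ∑ i, (a i : ℝ) * x i = (b : ℝ)} ∧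
        ∃ v ∈ Set.extremePoints ℝ P,
          IsLeast {t : ℝ | ∃ z : Fin n → ℤ,
              (fun i => (z i : ℝ)) ∈ P ∧ t = ‖v - fun i => (z i : ℝ)‖}
            ((k : ℝ) - 1) := by
  let i : Fin n := ⟨0, by omega⟩
  let j : Fin n := ⟨1, hn⟩
  have hij : i ≠ j := by simp [i, j, Fin.ext_iff]
  let a : Fin n → ℤ := update (fun _ => (k : ℤ)) j 1
  have hai : a i = k := update_of_ne hij _ _
  have hv := knapsackPolyhedron.single_mem_extremePoints (i := i) (b := k - 1)
    (hai ▸ Int.natCast_pos.2 hk) (by omega)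
  rw [hai] at hv
  refine ⟨a, k - 1, fun l => ?_, ?_, ?_, _, rfl, _, hv, ?_⟩
  · by_cases hl : l = j <;> simp [a, hl]; omega
  · exact Int.eq_one_of_dvd_one Int.finsetGcd_nonneg
      (by simpa [a] using gcd_dvd (mem_univ j) (f := a))
  · refine le_antisymm (Finset.sup_le fun l _ => ?_) ?_
    · by_cases hl : l = j <;> simp [a, hl]; omega
    · simpa [hai] using le_sup (f := fun l => (a l).natAbs) (mem_univ i)
  exact_mod_cast isLeast_dist_intPoints_knapsackPolyhedron_update_const hij (by omega : 1 ≤ (k : ℤ))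
end

section
/- Let a = (a_1, ..., a_n) ∈ Z^n_{>0} with n ≥ 2 and gcd(a) = 1, let g(a) be the Frobenius number of a, and let b ∈ Z be such that P(a,b) = {x ∈ R^n_{≥0} : a^T x = b} contains an integer point. Then for every vertex v of P(a,b) there is z ∈ P(a,b) ∩ Z^n with ‖v − z‖_∞ ≤ (g(a) + ‖a‖_∞)/min_i a_i. -/
/-!
A vertex `v` of `P(a, b) = {x ≥ 0 : aᵀx = b}` has at most one nonzero coordinate: if `v j` and
`v k` were both positive, `v ± ε (a k eⱼ - a j eₖ)` would lie in `P(a, b)` for small `ε > 0`.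
Hence `v = (b / aᵢ) eᵢ`. As `b` is representable, some `r = b - t aᵢ` with `t ≥ 0` is
representable and `r ≤ g + aᵢ`: take `r = b` if `b ≤ g + aᵢ`, and otherwise the element of
`(g, g + aᵢ]` congruent to `b` modulo `aᵢ`. If `y ≥ 0` represents `r`, then `z = y + t eᵢ` is an
integer point of `P(a, b)` with `v - z = (r / aᵢ) eᵢ - y`, and `aₗ yₗ ≤ r` bounds the `l`-th
coordinate of this by `r / aₗ ≤ (g + ‖a‖∞) / min a`.
-/

variable {ι : Type*} [Fintype ι]

def knapsackPolytope (a : ι → ℝ) (b : ℝ) : Set (ι → ℝ) :=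
  {x | (∀ i, 0 ≤ x i) ∧ ∑ i, a i * x i = b}

namespace knapsackPolytope

variable {a : ι → ℝ} {b : ℝ} {v d : ι → ℝ}

theorem add_mem (hv : v ∈ knapsackPolytope a b) (hd : ∑ i, a i * d i = 0)
    (hdv : ∀ i, |d i| ≤ v i) : v + d ∈ knapsackPolytope a b := by
  refine ⟨fun i => ?_, ?_⟩
  · linarith [neg_abs_le (d i), hdv i, show (v + d) i = v i + d i from rfl]
  · simp only [Pi.add_apply, mul_add, Finset.sum_add_distrib, hv.2, hd, add_zero]

theorem eq_zero_of_mem_extremePoints (hv : v ∈ Set.extremePoints ℝ (knapsackPolytope a b))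
    (hd : ∑ i, a i * d i = 0) (hdv : ∀ i, |d i| ≤ v i) : d = 0 := by
  have hplus := add_mem hv.1 hd hdv
  have hminus := add_mem (d := -d) hv.1 (by simp [Finset.sum_neg_distrib, hd])
    (by simpa using hdv)
  have hseg : v ∈ openSegment ℝ (v + d) (v + -d) :=
    ⟨1 / 2, 1 / 2, by norm_num, by norm_num, by norm_num, by module⟩
  simpa using hv.2 hplus hminus hseg

theorem eq_zero_or_eq_zero_of_mem_extremePoints (ha : ∀ i, 0 < a i)
    (hv : v ∈ Set.extremePoints ℝ (knapsackPolytope a b)) {j k : ι} (hjk : j ≠ k) :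
    v j = 0 ∨ v k = 0 := by
  classical
  by_contra! h
  have hvj : 0 < v j := (hv.1.1 j).lt_of_ne' h.1
  have hvk : 0 < v k := (hv.1.1 k).lt_of_ne' h.2
  set ε := min (v j / a k) (v k / a j)
  have hε : 0 < ε := lt_min (div_pos hvj (ha k)) (div_pos hvk (ha j))
  set d : ι → ℝ := Pi.single j (ε * a k) - Pi.single k (ε * a j)
  have hd : ∑ i, a i * d i = 0 := by
    simp only [d, Pi.sub_apply, mul_sub, Finset.sum_sub_distrib, Pi.single_apply, mul_ite,
      mul_zero, Finset.sum_ite_eq', Finset.mem_univ, if_true]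
    ring
  have hdv : ∀ i, |d i| ≤ v i := by
    intro i
    rcases eq_or_ne i j with rfl | hij
    · simp only [d, Pi.sub_apply, Pi.single_eq_same, Pi.single_eq_of_ne hjk, sub_zero,
        abs_of_pos (mul_pos hε (ha k))]
      exact (le_div_iff₀ (ha k)).1 (min_le_left _ _)
    rcases eq_or_ne i k with rfl | hik
    · simp only [d, Pi.sub_apply, Pi.single_eq_same, Pi.single_eq_of_ne hij, zero_sub,
        abs_neg, abs_of_pos (mul_pos hε (ha j))]
      exact (le_div_iff₀ (ha j)).1 (min_le_right _ _)
    · simpa [d, hij, hik] using hv.1.1 i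
  have := congrFun (eq_zero_of_mem_extremePoints hv hd hdv) j
  simp only [d, Pi.sub_apply, Pi.single_eq_same, Pi.single_eq_of_ne hjk, sub_zero,
    Pi.zero_apply] at this
  exact (mul_pos hε (ha k)).ne' this

theorem exists_eq_single_of_mem_extremePoints [Nonempty ι] [DecidableEq ι] (ha : ∀ i, 0 < a i)
    (hv : v ∈ Set.extremePoints ℝ (knapsackPolytope a b)) : ∃ i, v = Pi.single i (b / a i) := by
  obtain ⟨i, hi⟩ : ∃ i, ∀ j ≠ i, v j = 0 := by
    by_cases h : ∃ i, v i ≠ 0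
    · obtain ⟨i, hi⟩ := h
      exact ⟨i, fun j hji => (eq_zero_or_eq_zero_of_mem_extremePoints ha hv hji).resolve_right hi⟩
    · exact ⟨Classical.arbitrary ι, fun j _ => not_not.1 fun hj => h ⟨j, hj⟩⟩
  have hb : a i * v i = b := by
    rw [← hv.1.2, Finset.sum_eq_single i (fun j _ hji => by rw [hi j hji, mul_zero])
      (by simp)]
  refine ⟨i, funext fun j => ?_⟩
  rcases eq_or_ne j i with rfl | hji
  · rw [Pi.single_eq_same, ← hb, mul_div_cancel_left₀ _ (ha j).ne']
  · rw [Pi.single_eq_of_ne hji, hi j hji]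

theorem intCast_mem_iff {a z : ι → ℤ} {b : ℤ} :
    (fun i => (z i : ℝ)) ∈ knapsackPolytope (fun i => (a i : ℝ)) b ↔
      (∀ i, 0 ≤ z i) ∧ ∑ i, a i * z i = b := by
  simp only [knapsackPolytope, Set.mem_ofPred_eq]
  norm_cast

end knapsackPolytope

theorem abs_single_div_sub_le [DecidableEq ι] {a y : ι → ℝ} (ha : ∀ i, 0 < a i)
    (hy : ∀ i, 0 ≤ y i) (i l : ι) :
    |(Pi.single i ((∑ j, a j * y j) / a i) : ι → ℝ) l - y l| ≤ (∑ j, a j * y j) / a l := by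
  have hsum : 0 ≤ ∑ j, a j * y j := Finset.sum_nonneg fun j _ => mul_nonneg (ha j).le (hy j)
  have hyl : y l ≤ (∑ j, a j * y j) / a l := by
    rw [le_div_iff₀ (ha l), mul_comm]
    exact Finset.single_le_sum (f := fun j => a j * y j)
      (fun j _ => mul_nonneg (ha j).le (hy j)) (Finset.mem_univ l)
  have hsingle : 0 ≤ (Pi.single i ((∑ j, a j * y j) / a i) : ι → ℝ) l ∧
      (Pi.single i ((∑ j, a j * y j) / a i) : ι → ℝ) l ≤ (∑ j, a j * y j) / a l := by
    rcases eq_or_ne l i with rfl | hli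
    · simp only [Pi.single_eq_same, le_refl, and_true]
      exact div_nonneg hsum (ha l).le
    · simp only [Pi.single_eq_of_ne hli, le_refl, true_and]
      exact div_nonneg hsum (ha l).le
  exact abs_sub_le_iff.2 ⟨by linarith [hy l], by linarith [hsingle.1]⟩

theorem norm_single_div_sub_add_single_le [DecidableEq ι] {a y : ι → ℝ} {b t C : ℝ}
    (ha : ∀ i, 0 < a i) (hy : ∀ i, 0 ≤ y i) (i : ι) (hb : b = t * a i + ∑ j, a j * y j)
    (hC : ∀ l, (∑ j, a j * y j) / a l ≤ C) :
    ‖Pi.single i (b / a i) - (y + Pi.single i t)‖ ≤ C := by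
  have hdiff : Pi.single i (b / a i) - (y + Pi.single i t) =
      Pi.single i ((∑ j, a j * y j) / a i) - y := by
    ext j
    rcases eq_or_ne j i with rfl | hji
    · simp only [hb, Pi.sub_apply, Pi.add_apply, Pi.single_eq_same]
      field_simp [(ha j).ne']
      ring
    · simp [hji]
  have hC₀ : 0 ≤ C := (abs_nonneg _).trans ((abs_single_div_sub_le ha hy i i).trans (hC i))
  rw [hdiff, pi_norm_le_iff_of_nonneg hC₀]
  exact fun l => (abs_single_div_sub_le ha hy i l).trans (hC l)

theorem Int.exists_sub_mul_le_add_of_forall_lt {p : ℤ → Prop} {g b c : ℤ}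
    (hp : ∀ m, g < m → p m) (hb : p b) (hc : 0 < c) :
    ∃ t, 0 ≤ t ∧ p (b - t * c) ∧ b - t * c ≤ g + c := by
  by_cases hbg : b ≤ g + c
  · exact ⟨0, le_rfl, by simpa using hb, by simpa using hbg⟩
  have hdiv := Int.ediv_mul_add_emod (b - g - 1) c
  have hmod := Int.emod_nonneg (b - g - 1) hc.ne'
  have hmod' := Int.emod_lt_of_pos (b - g - 1) hc
  exact ⟨(b - g - 1) / c, Int.ediv_nonneg (by omega) hc.le, hp _ (by omega), by omega⟩

theorem stmt_8_general (n : ℕ) (a : Fin n → ℤ) (ha : ∀ i, 0 < a i)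
    (g : ℤ)
    (hg : IsGreatest {m : ℤ |
      ¬ ∃ x : Fin n → ℤ, (∀ i, 0 ≤ x i) ∧ ∑ i, a i * x i = m} g)
    (M m : ℤ) (hM : IsGreatest (Set.range a) M) (hm : IsLeast (Set.range a) m)
    (b : ℤ) (P : Set (Fin n → ℝ))
    (hP : P = {x | (∀ i, 0 ≤ x i) ∧ ∑ i, (a i : ℝ) * x i = (b : ℝ)})
    (hfeas : ∃ z : Fin n → ℤ, (fun i => (z i : ℝ)) ∈ P)
    (v : Fin n → ℝ) (hv : v ∈ Set.extremePoints ℝ P) :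
    ∃ z : Fin n → ℤ, (fun i => (z i : ℝ)) ∈ P ∧
      ‖v - fun i => (z i : ℝ)‖ ≤ ((g : ℝ) + (M : ℝ)) / (m : ℝ) := by
  obtain rfl : P = knapsackPolytope (fun i => (a i : ℝ)) b := hP
  have haR : ∀ i, (0 : ℝ) < a i := fun i => Int.cast_pos.2 (ha i)
  obtain ⟨i₀, hi₀⟩ := hm.1
  have : Nonempty (Fin n) := ⟨i₀⟩
  obtain ⟨i, rfl⟩ := knapsackPolytope.exists_eq_single_of_mem_extremePoints haR hv
  have hfrob : ∀ k, g < k → ∃ x : Fin n → ℤ, (∀ i, 0 ≤ x i) ∧ ∑ i, a i * x i = k :=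
    fun k hk => not_not.1 fun h => (hg.2 h).not_gt hk
  obtain ⟨z₀, hz₀⟩ := hfeas
  obtain ⟨t, ht, ⟨y, hy, hyr⟩, hr⟩ := Int.exists_sub_mul_le_add_of_forall_lt hfrob
    ⟨z₀, knapsackPolytope.intCast_mem_iff.1 hz₀⟩ (ha i)
  have hzb : ∑ j, a j * (y + Pi.single i t : Fin n → ℤ) j = b := by
    simp only [Pi.add_apply, mul_add, Finset.sum_add_distrib, hyr, Pi.single_apply, mul_ite,
      mul_zero, Finset.sum_ite_eq', Finset.mem_univ, if_true]
    ring
  refine ⟨y + Pi.single i t, knapsackPolytope.intCast_mem_iff.2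
    ⟨add_nonneg (α := Fin n → ℤ) hy (Pi.single_nonneg.2 ht), hzb⟩, ?_⟩
  have hcast : (fun j => ((y + Pi.single i t : Fin n → ℤ) j : ℝ)) =
      (fun j => (y j : ℝ)) + Pi.single i (t : ℝ) := by
    ext j
    simp [Pi.single_apply, apply_ite (Int.cast : ℤ → ℝ)]
  have hyr₀ : 0 ≤ b - t * a i := hyr ▸ Finset.sum_nonneg fun j _ => mul_nonneg (ha j).le (hy j)
  have hyrM : b - t * a i ≤ g + M := hr.trans (by linarith [hM.2 ⟨i, rfl⟩])
  have hyrR : ∑ j, (a j : ℝ) * y j = ((b - t * a i : ℤ) : ℝ) := by exact_mod_cast hyr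
  rw [hcast]
  refine norm_single_div_sub_add_single_le haR (fun j => by exact_mod_cast hy j) i
    (by rw [hyrR]; push_cast; ring) fun l => ?_
  rw [hyrR]
  exact div_le_div₀ (by exact_mod_cast hyr₀.trans hyrM) (by exact_mod_cast hyrM)
    (hi₀ ▸ haR i₀) (by exact_mod_cast hm.2 ⟨l, rfl⟩)

/-- for a positive primitive integer vector `a` with Frobenius
number `g` (the greatest integer not representable as a nonnegative integer
combination of the `aᵢ`), and any `b` such that `P(a,b)` contains an integer
point, every vertex `v` of `P(a,b)` has an integer point `z ∈ P(a,b)` with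
`‖v − z‖_∞ ≤ (g + max aᵢ) / min aᵢ`. -/
theorem stmt_8 (n : ℕ) (hn : 2 ≤ n) (a : Fin n → ℤ) (ha : ∀ i, 0 < a i)
    (hgcd : Finset.univ.gcd a = 1)
    (g : ℤ)
    (hg : IsGreatest {m : ℤ |
      ¬ ∃ x : Fin n → ℤ, (∀ i, 0 ≤ x i) ∧ ∑ i, a i * x i = m} g)
    (M m : ℤ) (hM : IsGreatest (Set.range a) M) (hm : IsLeast (Set.range a) m)
    (b : ℤ) (P : Set (Fin n → ℝ))
    (hP : P = {x | (∀ i, 0 ≤ x i) ∧ ∑ i, (a i : ℝ) * x i = (b : ℝ)})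
    (hfeas : ∃ z : Fin n → ℤ, (fun i => (z i : ℝ)) ∈ P)
    (v : Fin n → ℝ) (hv : v ∈ Set.extremePoints ℝ P) :
    ∃ z : Fin n → ℤ, (fun i => (z i : ℝ)) ∈ P ∧
      ‖v - fun i => (z i : ℝ)‖ ≤ ((g : ℝ) + (M : ℝ)) / (m : ℝ) :=
  stmt_8_general n a ha g hg M m hM hm b P hP hfeas v hv
end

section
/- (Schur's bound) Let a_1, ..., a_n be positive integers with gcd equal to 1 and n ≥ 2, let m = min_i a_i and M = max_i a_i. Then the Frobenius number satisfies g(a) ≤ mM − m − M. -/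
/-!
Let `m = a j`. Call `S c ⊆ ℤ/m` the residues of sums of at most `c` of the `a i` (with
repetition). The chain `S 0 ⊆ S 1 ⊆ ⋯` grows strictly until it is all of `ℤ/m`: a stable
`S c` is closed under adding every `a i`, hence under the submonoid they generate, which is
all of `ℤ/m` because the gcd is `1`. So every residue is the residue of some
`t = ∑ a i * x i` with `∑ x i ≤ m - 1`, whence `t ≤ (m - 1) M`. If `b > mM - m - M`, then
`b - t > -m` is a multiple of `m`, hence a nonnegative one, and adding it to `x j`
represents `b`.
-/

open Set

theorem Set.eq_univ_at_card_sub_one_of_monotone {α : Type*} [Finite α] {S : ℕ → Set α}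
    (hS : Monotone S) (h0 : (S 0).Nonempty) (hstable : ∀ c, S (c + 1) = S c → S c = univ) :
    S (Nat.card α - 1) = univ := by
  have grow : ∀ c, S c = univ ∨ c + 1 ≤ (S c).ncard := by
    intro c
    induction c with
    | zero => exact .inr ((ncard_pos).mpr h0)
    | succ c ih =>
      by_cases hc : S (c + 1) = S c
      · exact .inl (hc ▸ hstable c hc)
      rcases ih with h | h
      · exact .inl (univ_subset_iff.mp (h ▸ hS (c.le_add_right 1)))
      · have := ncard_lt_ncard ((hS (c.le_add_right 1)).ssubset_of_ne (Ne.symm hc))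
        exact .inr (by omega)
  rcases grow (Nat.card α - 1) with h | h
  · exact h
  · have : Nonempty α := h0.to_subtype.map Subtype.val
    have := Nat.card_pos (α := α)
    exact eq_of_subset_of_ncard_le (subset_univ _) (by rw [ncard_univ]; omega)

section SumsAtMost

variable {G ι : Type*} [AddCommMonoid G] [Fintype ι]

def sumsAtMost (s : ι → G) (c : ℕ) : Set G :=
  {g | ∃ x : ι → ℕ, ∑ i, x i ≤ c ∧ ∑ i, x i • s i = g}

variable {s : ι → G}

theorem zero_mem_sumsAtMost (c : ℕ) : (0 : G) ∈ sumsAtMost s c :=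
  ⟨0, by simp⟩

theorem sumsAtMost_mono : Monotone (sumsAtMost s) :=
  fun _ _ hcd _ ⟨x, hx, hxg⟩ => ⟨x, hx.trans hcd, hxg⟩

theorem add_mem_sumsAtMost_succ [DecidableEq ι] {c : ℕ} {g : G} (hg : g ∈ sumsAtMost s c)
    (i : ι) : g + s i ∈ sumsAtMost s (c + 1) := by
  obtain ⟨x, hx, rfl⟩ := hg
  refine ⟨x + Pi.single i 1, ?_, ?_⟩
  · simpa [Finset.sum_add_distrib] using hx
  · simp [Finset.sum_add_distrib, add_smul, Pi.single_apply]

theorem sumsAtMost_eq_univ_of_succ_eq (hs : AddSubmonoid.closure (range s) = ⊤) {c : ℕ}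
    (hc : sumsAtMost s (c + 1) = sumsAtMost s c) : sumsAtMost s c = univ := by
  classical
  let T : AddSubmonoid G :=
    { carrier := {g | ∀ z ∈ sumsAtMost s c, z + g ∈ sumsAtMost s c}
      zero_mem' := by simp
      add_mem' := fun hg hh z hz => add_assoc z _ _ ▸ hh _ (hg z hz) }
  have hT : AddSubmonoid.closure (range s) ≤ T := by
    rw [AddSubmonoid.closure_le]
    rintro _ ⟨i, rfl⟩ z hz
    exact hc ▸ add_mem_sumsAtMost_succ hz i
  refine eq_univ_of_forall fun g => ?_
  simpa using hT (hs ▸ AddSubmonoid.mem_top g) 0 (zero_mem_sumsAtMost c)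

theorem sumsAtMost_card_sub_one_eq_univ [Finite G] (hs : AddSubmonoid.closure (range s) = ⊤) :
    sumsAtMost s (Nat.card G - 1) = univ :=
  eq_univ_at_card_sub_one_of_monotone sumsAtMost_mono ⟨0, zero_mem_sumsAtMost 0⟩
    fun _ => sumsAtMost_eq_univ_of_succ_eq hs

end SumsAtMost

theorem ZMod.closure_range_intCast_eq_top {ι : Type*} [Fintype ι] (N : ℕ) [NeZero N]
    {a : ι → ℤ} (ha : Finset.univ.gcd a = 1) :
    AddSubmonoid.closure (range fun i => (a i : ZMod N)) = ⊤ := by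
  suffices AddSubgroup.closure (range fun i => (a i : ZMod N)) = ⊤ by
    rw [← AddSubgroup.closure_toAddSubmonoid_of_finite, this, AddSubgroup.top_toAddSubmonoid]
  refine (AddSubgroup.eq_top_iff' _).mpr fun z => ?_
  obtain ⟨y, hy⟩ := Finset.univ.gcd_eq_sum_mul a
  have hz : z = ∑ i, (z.cast * y i) • (a i : ZMod N) := by
    conv_lhs => rw [← ZMod.intCast_zmod_cast z, ← mul_one (z.cast : ℤ), ← ha, hy,
      Finset.mul_sum]
    push_cast
    exact Finset.sum_congr rfl fun i _ => by rw [zsmul_eq_mul]; push_cast; ring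
  rw [hz]
  exact AddSubgroup.sum_mem _ fun i _ =>
    AddSubgroup.zsmul_mem _ (AddSubgroup.subset_closure (mem_range_self i)) _

theorem Int.exists_sum_le_and_sum_mul_modEq {ι : Type*} [Fintype ι] {a : ι → ℤ}
    (ha : Finset.univ.gcd a = 1) {N : ℕ} (hN : 0 < N) (b : ℤ) :
    ∃ x : ι → ℕ, ∑ i, x i ≤ N - 1 ∧ ∑ i, a i * x i ≡ b [ZMOD N] := by
  have : NeZero N := ⟨hN.ne'⟩
  have hall := sumsAtMost_card_sub_one_eq_univ (ZMod.closure_range_intCast_eq_top N ha)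
  rw [Nat.card_zmod] at hall
  obtain ⟨x, hx, hxb⟩ := hall.symm ▸ mem_univ (b : ZMod N)
  refine ⟨x, hx, (ZMod.intCast_eq_intCast_iff _ _ N).mp ?_⟩
  simpa [nsmul_eq_mul, mul_comm] using hxb

theorem Int.exists_nonneg_sum_mul_eq_of_lt {ι : Type*} [Fintype ι] [DecidableEq ι]
    {a : ι → ℤ} (ha : Finset.univ.gcd a = 1) {j : ι} (hj : 0 < a j) {M : ℤ}
    (hM : ∀ i, a i ≤ M) {b : ℤ} (hb : a j * M - a j - M < b) :
    ∃ x : ι → ℤ, (∀ i, 0 ≤ x i) ∧ ∑ i, a i * x i = b := by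
  obtain ⟨x, hx, hxb⟩ := exists_sum_le_and_sum_mul_modEq ha (N := (a j).toNat) (by omega) b
  rw [toNat_of_nonneg hj.le] at hxb
  have hx' : ∑ i, (x i : ℤ) ≤ a j - 1 := by
    have : ((∑ i, x i : ℕ) : ℤ) ≤ ((a j).toNat - 1 : ℕ) := by exact_mod_cast hx
    push_cast at this
    omega
  have ht : ∑ i, a i * x i ≤ M * (a j - 1) :=
    calc ∑ i, a i * x i ≤ ∑ i, M * x i :=
          Finset.sum_le_sum fun i _ => mul_le_mul_of_nonneg_right (hM i) (by positivity)
      _ = M * ∑ i, (x i : ℤ) := by rw [Finset.mul_sum]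
      _ ≤ M * (a j - 1) := mul_le_mul_of_nonneg_left hx' ((hj.trans_le (hM j)).le)
  obtain ⟨q, hq⟩ := hxb.dvd
  have hq0 : 0 ≤ q := by nlinarith
  refine ⟨fun i => x i + if i = j then q else 0,
    fun i => by dsimp only; split_ifs <;> positivity, ?_⟩
  simp only [mul_add, Finset.sum_add_distrib, mul_ite, mul_zero, Finset.sum_ite_eq',
    Finset.mem_univ, if_true]
  linarith

theorem stmt_9_general (n : ℕ) (a : Fin n → ℤ) (ha : ∀ i, 0 < a i)
    (hgcd : Finset.univ.gcd a = 1)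
    (M m : ℤ) (hM : IsGreatest (Set.range a) M) (hm : IsLeast (Set.range a) m)
    (g : ℤ)
    (hg : IsGreatest {b : ℤ |
      ¬ ∃ x : Fin n → ℤ, (∀ i, 0 ≤ x i) ∧ ∑ i, a i * x i = b} g) :
    g ≤ m * M - m - M := by
  obtain ⟨j, rfl⟩ := hm.1
  by_contra! hlt
  exact hg.1 (Int.exists_nonneg_sum_mul_eq_of_lt hgcd (ha j) (fun i => hM.2 ⟨i, rfl⟩) hlt)

/-- Schur's bound: for positive integers `a₁,…,a_n` (`n ≥ 2`) with
gcd 1, minimum `m` and maximum `M`, the Frobenius number `g` satisfies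
`g ≤ mM − m − M`. -/
theorem stmt_9 (n : ℕ) (hn : 2 ≤ n) (a : Fin n → ℤ) (ha : ∀ i, 0 < a i)
    (hgcd : Finset.univ.gcd a = 1)
    (M m : ℤ) (hM : IsGreatest (Set.range a) M) (hm : IsLeast (Set.range a) m)
    (g : ℤ)
    (hg : IsGreatest {b : ℤ |
      ¬ ∃ x : Fin n → ℤ, (∀ i, 0 ≤ x i) ∧ ∑ i, a i * x i = b} g) :
    g ≤ m * M - m - M :=
  stmt_9_general n a ha hgcd M m hM hm g hg
end

section
/- Let a ∈ Z^n with n ≥ 2, all entries nonzero and gcd(a) = 1, suppose a has at least one positive and at least one negative entry, and let b ∈ Z. Then the polyhedron P(a,b) = {x ∈ R^n_{≥0} : a^T x = b} is unbounded and nonempty. -/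
/-!
Put an arbitrarily large weight `t` on a coordinate `j` with `a j < 0` and balance the
equation `aᵀx = b` with a coordinate `i` with `a i > 0`; the result lies in `P(a,b)` and has
sup norm at least `t`.
-/

open Finset

def nonnegSolutions {ι : Type*} [Fintype ι] (a : ι → ℝ) (b : ℝ) : Set (ι → ℝ) :=
  {x | (∀ i, 0 ≤ x i) ∧ ∑ i, a i * x i = b}

section

variable {ι : Type*} [Fintype ι] [DecidableEq ι] {a : ι → ℝ} {i j : ι}

theorem exists_mem_nonnegSolutions_apply_eq (hi : 0 < a i) (hj : a j < 0) {b t : ℝ}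
    (ht : 0 ≤ t) (htb : a j * t ≤ b) : ∃ x ∈ nonnegSolutions a b, x j = t := by
  have hij : i ≠ j := fun h => (hi.trans (h ▸ hj)).false
  set s := (b - a j * t) / a i
  have hs : 0 ≤ s := div_nonneg (sub_nonneg.2 htb) hi.le
  refine ⟨Pi.single i s + Pi.single j t, ⟨fun k => ?_, ?_⟩, by simp [hij]⟩
  · rcases eq_or_ne k i with rfl | hki
    · simp [hij, hs]
    · rcases eq_or_ne k j with rfl | hkj
      · simp [hki, ht]
      · simp [hki, hkj]
  · have hsum : ∑ k, a k * (Pi.single i s + Pi.single j t : ι → ℝ) k = a i * s + a j * t := by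
      simp [mul_add, sum_add_distrib, Pi.single_apply]
    rw [hsum, mul_div_cancel₀ _ hi.ne']
    ring

theorem exists_mem_nonnegSolutions_lt_norm (hi : 0 < a i) (hj : a j < 0) (b R : ℝ) :
    ∃ x ∈ nonnegSolutions a b, R < ‖x‖ := by
  set t := max (R + 1) (max 0 (b / a j))
  have ht : 0 ≤ t := (le_max_left _ _).trans (le_max_right _ _)
  have htb : a j * t ≤ b := by
    have : b / a j ≤ t := (le_max_right _ _).trans (le_max_right _ _)
    rwa [div_le_iff_of_neg hj, mul_comm] at this
  obtain ⟨x, hx, hxj⟩ := exists_mem_nonnegSolutions_apply_eq hi hj ht htb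
  refine ⟨x, hx, ?_⟩
  calc R < R + 1 := lt_add_one R
    _ ≤ t := le_max_left _ _
    _ = |x j| := by rw [hxj, abs_of_nonneg ht]
    _ ≤ ‖x‖ := norm_le_pi_norm x j

end

theorem stmt_11_general (n : ℕ) (a : Fin n → ℤ)
    (hpos : ∃ i, 0 < a i) (hneg : ∃ i, a i < 0) (b : ℤ)
    (P : Set (Fin n → ℝ))
    (hP : P = {x | (∀ i, 0 ≤ x i) ∧ ∑ i, (a i : ℝ) * x i = (b : ℝ)}) :
    P.Nonempty ∧ ∀ R : ℝ, ∃ x ∈ P, R < ‖x‖ := by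
  obtain ⟨i, hi⟩ := hpos
  obtain ⟨j, hj⟩ := hneg
  have unbounded : ∀ R : ℝ, ∃ x ∈ P, R < ‖x‖ := hP ▸
    exists_mem_nonnegSolutions_lt_norm (a := fun k => (a k : ℝ)) (Int.cast_pos.2 hi)
      (Int.cast_lt_zero.2 hj) b
  obtain ⟨x, hx, -⟩ := unbounded 0
  exact ⟨⟨x, hx⟩, unbounded⟩

/-- if the primitive integer vector `a` (nonzero entries, `n ≥ 2`)
has at least one positive and at least one negative entry, then for every
`b ∈ ℤ` the knapsack polyhedron `P(a,b)` is nonempty and unbounded. -/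
theorem stmt_11 (n : ℕ) (hn : 2 ≤ n) (a : Fin n → ℤ) (ha : ∀ i, a i ≠ 0)
    (hgcd : Finset.univ.gcd a = 1)
    (hpos : ∃ i, 0 < a i) (hneg : ∃ i, a i < 0) (b : ℤ)
    (P : Set (Fin n → ℝ))
    (hP : P = {x | (∀ i, 0 ≤ x i) ∧ ∑ i, (a i : ℝ) * x i = (b : ℝ)}) :
    P.Nonempty ∧ ∀ R : ℝ, ∃ x ∈ P, R < ‖x‖ :=
  stmt_11_general n a hpos hneg b P hP
end

section
/- For every positive integer k and n ≥ 2 there exist a ∈ Z^n with nonzero entries, gcd(a)=1, ‖a‖_∞ = k, and c ∈ Q^n such that Gap(c,a) = (‖a‖_∞ − 1)‖c‖_1. Concretely, for a = (k,...,k,1) and c = e_n, one has b = k−1 gives IP(c,a,b) = k−1 and LP(c,a,b) = 0, so IG(c,a,b) = k−1 = (k−1)‖c‖_1. -/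
/-!
Take `a = (k, …, k, 1)` and `c = e_n` with right-hand side `b = k - 1`. Writing
`z_n = (k - 1) - k · (z_1 + ⋯ + z_{n-1})`, a nonnegative integer point must have
`z_1 = ⋯ = z_{n-1} = 0`, so the integer optimum is `k - 1`; the fractional point
`((k - 1)/k) e_1` is feasible with cost `0`, which is the LP optimum since `c ≥ 0`.
Hence the gap is `k - 1 = (‖a‖_∞ - 1) ‖c‖₁`.
-/

open Finset

theorem Finset.gcd_eq_one_of_isUnit {α β : Type*} [CommMonoidWithZero α]
    [NormalizedGCDMonoid α] {s : Finset β} {f : β → α} {b : β} (hb : b ∈ s)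
    (hf : IsUnit (f b)) : s.gcd f = 1 := by
  rw [← normalize_gcd, normalize_eq_one]
  exact isUnit_of_dvd_unit (gcd_dvd hb) hf

namespace Knapsack

variable {ι : Type*} [DecidableEq ι]

def row (k : ℕ) (j : ι) : ι → ℤ := Function.update (fun _ => (k : ℤ)) j 1

lemma row_ne_zero {k : ℕ} (hk : 1 ≤ k) (j i : ι) : row k j i ≠ 0 := by
  unfold row
  rcases eq_or_ne i j with rfl | hij
  · simp
  · simp [hij]; omega

variable [Fintype ι]

def polytope (a : ι → ℤ) (b : ℤ) : Set (ι → ℝ) :=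
  {x | (∀ i, 0 ≤ x i) ∧ ∑ i, (a i : ℝ) * x i = b}

def integerValues (c : ι → ℚ) (P : Set (ι → ℝ)) : Set ℝ :=
  {t | ∃ z : ι → ℤ, (fun i => (z i : ℝ)) ∈ P ∧ t = ∑ i, (c i : ℝ) * (z i : ℝ)}

def lpValues (c : ι → ℚ) (P : Set (ι → ℝ)) : Set ℝ :=
  {t | ∃ x ∈ P, t = ∑ i, (c i : ℝ) * x i}

lemma gcd_row (k : ℕ) (j : ι) : univ.gcd (row k j) = 1 :=
  Finset.gcd_eq_one_of_isUnit (mem_univ j) (by simp [row])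

lemma sup_natAbs_row {k : ℕ} (hk : 1 ≤ k) {i j : ι} (hij : i ≠ j) :
    (univ.sup fun l => (row k j l).natAbs) = k := by
  apply le_antisymm
  · refine Finset.sup_le fun l _ => ?_
    rcases eq_or_ne l j with rfl | hlj
    · simpa [row] using hk
    · simp [row, hlj]
  · simpa [row, hij] using le_sup (f := fun l => (row k j l).natAbs) (mem_univ i)

lemma sum_row_mul {R : Type*} [CommRing R] (k : ℕ) (j : ι) (x : ι → R) :
    ∑ i, (row k j i : R) * x i = x j + k * ∑ i ∈ univ.erase j, x i := by
  rw [← add_sum_erase _ _ (mem_univ j), mul_sum]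
  congr 1
  · simp [row]
  · exact sum_congr rfl fun i hi => by simp [row, (mem_erase.mp hi).1]

lemma sum_single_mul (j : ι) (x : ι → ℝ) :
    ∑ i, ((Pi.single j 1 : ι → ℚ) i : ℝ) * x i = x j := by
  simp [Pi.single_apply, apply_ite (Rat.cast : ℚ → ℝ)]

lemma sum_abs_single (j : ι) : ∑ i, |((Pi.single j 1 : ι → ℚ) i : ℝ)| = 1 := by
  rw [Fintype.sum_eq_single j fun i hi => by simp [hi]]
  simp

lemma isLeast_integerValues {k : ℕ} (hk : 1 ≤ k) (j : ι) :
    IsLeast (integerValues (Pi.single j 1) (polytope (row k j) (k - 1))) ((k : ℝ) - 1) := by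
  constructor
  · refine ⟨Pi.single j ((k : ℤ) - 1), ⟨fun i => ?_, ?_⟩, ?_⟩
    · rcases eq_or_ne i j with rfl | hij
      · simp; omega
      · simp [hij]
    · rw [sum_row_mul, sum_eq_zero fun i hi => by simp [(mem_erase.mp hi).1]]
      simp
    · simp [sum_single_mul]
  · rintro t ⟨z, ⟨hz_nonneg, hz_sum⟩, rfl⟩
    have hz : ∀ i, 0 ≤ z i := fun i => Int.cast_nonneg_iff.mp (hz_nonneg i)
    have hsum : z j + k * ∑ i ∈ univ.erase j, z i = k - 1 := by
      have h : ∑ i, (row k j i : ℝ) * (z i : ℝ) = ((k - 1 : ℤ) : ℝ) := hz_sum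
      rw [sum_row_mul] at h
      exact_mod_cast h
    have hrest : ∑ i ∈ univ.erase j, z i = 0 := by
      have := sum_nonneg fun i (_ : i ∈ univ.erase j) => hz i
      nlinarith [hz j]
    have hzj : (z j : ℝ) = k - 1 := by
      rw [hrest, mul_zero, add_zero] at hsum
      exact_mod_cast hsum
    simp [sum_single_mul, hzj]

lemma isLeast_lpValues {k : ℕ} (hk : 1 ≤ k) {i j : ι} (hij : i ≠ j) :
    IsLeast (lpValues (Pi.single j 1) (polytope (row k j) (k - 1))) 0 := by
  have hk' : (k : ℝ) ≠ 0 := by positivity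
  constructor
  · refine ⟨Pi.single i (((k : ℝ) - 1) / k), ⟨fun l => ?_, ?_⟩, ?_⟩
    · rcases eq_or_ne l i with rfl | hli
      · simp only [Pi.single_eq_same]
        have : (1 : ℝ) ≤ k := by exact_mod_cast hk
        exact div_nonneg (by linarith) (by linarith)
      · simp [hli]
    · simp [row, Pi.single_apply, hij]
      field_simp
    · simp [sum_single_mul, hij.symm]
  · rintro t ⟨x, ⟨hx_nonneg, _⟩, rfl⟩
    rw [sum_single_mul]
    exact hx_nonneg j

lemma integrality_gap_row {k : ℕ} (hk : 1 ≤ k) {i j : ι} (hij : i ≠ j) :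
    sInf (integerValues (Pi.single j 1) (polytope (row k j) (k - 1))) -
      sInf (lpValues (Pi.single j 1) (polytope (row k j) (k - 1))) = (k : ℝ) - 1 := by
  rw [(isLeast_integerValues hk j).csInf_eq, (isLeast_lpValues hk hij).csInf_eq, sub_zero]

end Knapsack

open Knapsack in
/-- for every `k ≥ 1` and `n ≥ 2` there exist a primitive integer
vector `a` with nonzero entries and `‖a‖_∞ = k`, and a cost vector `c ∈ ℚ^n`,
such that for some `b` the integer knapsack problem is feasible and bounded and
its integrality gap equals `(‖a‖_∞ − 1)·‖c‖₁`; hence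
`Gap(c,a) = (‖a‖_∞ − 1)·‖c‖₁`. -/
theorem stmt_15 (n k : ℕ) (hn : 2 ≤ n) (hk : 1 ≤ k) :
    ∃ (a : Fin n → ℤ) (c : Fin n → ℚ),
      (∀ i, a i ≠ 0) ∧ Finset.univ.gcd a = 1 ∧
      (Finset.univ.sup fun i => (a i).natAbs) = k ∧
      ∃ (b : ℤ) (P : Set (Fin n → ℝ)) (IPvals : Set ℝ),
        P = {x | (∀ i, 0 ≤ x i) ∧ ∑ i, (a i : ℝ) * x i = (b : ℝ)} ∧
        IPvals = {t | ∃ z : Fin n → ℤ, (fun i => (z i : ℝ)) ∈ P ∧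
            t = ∑ i, (c i : ℝ) * (z i : ℝ)} ∧
        IPvals.Nonempty ∧ BddBelow IPvals ∧
        sInf IPvals - sInf {t | ∃ x ∈ P, t = ∑ i, (c i : ℝ) * x i} =
          ((k : ℝ) - 1) * ∑ i, |(c i : ℝ)| := by
  obtain ⟨m, rfl⟩ : ∃ m, n = m + 2 := ⟨n - 2, by omega⟩
  have hij : (0 : Fin (m + 2)) ≠ Fin.last (m + 1) := Fin.last_pos.ne
  have hIP := isLeast_integerValues hk (Fin.last (m + 1))
  refine ⟨row k (Fin.last (m + 1)), Pi.single (Fin.last (m + 1)) 1, row_ne_zero hk _,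
    gcd_row k _, sup_natAbs_row hk hij, k - 1, _, _, rfl, rfl, hIP.nonempty, hIP.bddBelow, ?_⟩
  exact (integrality_gap_row hk hij).trans (by rw [sum_abs_single, mul_one])
end
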